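/- The generalized intersection problem of recognizable relations with the suffix relation is decidable for arbitrary intersection patterns. Precisely: for every k : ℕ, the predicate P on triples (m, Renc, I) — m : ℕ, Renc : List (List E) where E is the type of encoded NFAs over Fin k, and I : List (ℕ × ℕ) — defined by: P(m, Renc, I) ↔ every member of Renc has length m, every (i,j) ∈ I satisfies i < m and j < m, and there exists ws : List (List (Fin k)) with ws.length = m such that for some ℓ ∈ Renc, for every t < m the NFA ℓ.get t accepts ws.get t, and for every (i,j) ∈ I the word ws.get i is a suffix (List.IsSuffix) of ws.get j — is computable: ComputablePred P. -/

import Mathlib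

/-- An encoded NFA over alphabet `β`: a list of transitions, an initial state,
and a list of final states. -/
abbrev EncNFA (β : Type) : Type := List (ℕ × β × ℕ) × ℕ × List ℕ

/-- Acceptance of a word by an encoded NFA. -/
def encAccepts {β : Type} (M : EncNFA β) (u : List β) : Prop :=
  ∃ r : List ℕ, ∃ hr : r.length = u.length + 1,
    r.head? = some M.2.1 ∧
    (∃ qf ∈ M.2.2, r.getLast? = some qf) ∧
    ∀ i, ∀ hi : i < u.length,
      (r.get ⟨i, by omega⟩, u.get ⟨i, hi⟩, r.get ⟨i + 1, by omega⟩) ∈ M.1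

/-- The convolution `w ⊗ w'` of two words. -/
def conv {A : Type} (w w' : List A) : List (Option A × Option A) :=
  (List.range (max w.length w'.length)).map fun k => (w[k]?, w'[k]?)

/-!
An accepting computation of an NFA on a word `w` passes, at any distance `p` from the end of `w`,
through some state. For a solution `ws` of an instance with `m` components, record at each
distance `p` the profile of these split states (with "too short" for the words with fewer than `p`
letters). There are at most `(|Q| + 1) ^ m` profiles, `Q` the states of the `m` NFAs, so if some
word is longer than that, two distances `p < p'` have the same profile, and deleting the letters at
distances `p + 1, …, p'` from the end of every word still gives accepted words. Deleting a stretch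
at the same distance from the end of every word preserves the suffix relation, and the total length
drops. Hence a solvable instance has a solution with all words of length at most `(|Q| + 1) ^ m`,
and a bounded search decides the problem.
-/

theorem exists_lt_le_map_eq_of_card_le {γ : Type*} {t : Finset γ} {f : ℕ → γ} {L : ℕ}
    (ht : t.card ≤ L) (hf : ∀ p, f p ∈ t) : ∃ p p', p < p' ∧ p' ≤ L ∧ f p = f p' := by
  obtain ⟨x, hx, y, hy, hxy, hfxy⟩ := Finset.exists_ne_map_eq_of_card_lt_of_maps_to
    (s := Finset.range (L + 1)) (by simpa [Nat.lt_succ_iff] using ht) fun p _ => hf p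
  rw [Finset.mem_range] at hx hy
  rcases hxy.lt_or_gt with hlt | hlt
  · exact ⟨x, y, hlt, by omega, hfxy⟩
  · exact ⟨y, x, hlt, by omega, hfxy.symm⟩

namespace List

variable {α : Type*}

theorem mem_sections_replicate {L f : List α} {n : ℕ} :
    f ∈ (replicate n L).sections ↔ f.length = n ∧ ∀ a ∈ f, a ∈ L := by
  rw [mem_sections]
  induction n generalizing f with
  | zero => cases f <;> simp
  | succ n ih =>
    cases f with
    | nil => simp
    | cons a f => simp [replicate_succ, ih, and_left_comm]

variable {p p' : ℕ}

def cutEnd (p p' : ℕ) (w : List α) : List α := w.rdrop p' ++ w.rtake p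

@[simp]
theorem cutEnd_nil : cutEnd p p' ([] : List α) = [] := by simp [cutEnd]

theorem cutEnd_of_length_le {w : List α} (hpp' : p ≤ p') (hw : w.length ≤ p) :
    cutEnd p p' w = w := by
  simp [cutEnd, rdrop, rtake, Nat.sub_eq_zero_of_le (hw.trans hpp'), Nat.sub_eq_zero_of_le hw]

theorem length_cutEnd (w : List α) :
    (cutEnd p p' w).length = w.length - p' + min p w.length := by
  simp [cutEnd, rdrop, rtake]
  omega

theorem length_cutEnd_le (hpp' : p ≤ p') (w : List α) : (cutEnd p p' w).length ≤ w.length := by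
  rw [length_cutEnd]; omega

theorem length_cutEnd_lt (hpp' : p < p') {w : List α} (hw : p' ≤ w.length) :
    (cutEnd p p' w).length < w.length := by
  rw [length_cutEnd]; omega

theorem IsSuffix.cutEnd {u v : List α} (h : u <:+ v) (hpp' : p ≤ p') :
    u.cutEnd p p' <:+ v.cutEnd p p' := by
  obtain ⟨x, rfl⟩ := h
  by_cases hu : p' ≤ u.length
  · have hcut : (x ++ u).cutEnd p p' = x ++ u.cutEnd p p' := by
      simp only [List.cutEnd, rdrop, rtake, length_append, take_append, drop_append]
      rw [take_of_length_le (by omega), drop_of_length_le (by omega), nil_append, append_assoc,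
        show x.length + u.length - p' - x.length = u.length - p' by omega,
        show x.length + u.length - p - x.length = u.length - p by omega]
    rw [hcut]
    exact suffix_append x _
  · have hrtake : u.rtake p <:+ (x ++ u).rtake p :=
      suffix_of_suffix_length_le ((drop_suffix _ _).trans (suffix_append x u)) (drop_suffix _ _)
        (by simp [rtake]; omega)
    simpa [List.cutEnd, rdrop, Nat.sub_eq_zero_of_le (Nat.le_of_not_le hu)] using
      hrtake.trans (suffix_append _ _)

end List

noncomputable def wordsOfLengthLE (β : Type*) [Fintype β] (N : ℕ) : List (List β) :=
  (List.range (N + 1)).flatMap fun n => (List.replicate n Finset.univ.toList).sections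

theorem mem_wordsOfLengthLE {β : Type*} [Fintype β] {N : ℕ} {w : List β} :
    w ∈ wordsOfLengthLE β N ↔ w.length ≤ N := by
  simp [wordsOfLengthLE, List.mem_sections_replicate]

theorem NFA.append_mem_accepts_iff {α σ : Type*} {M : NFA α σ} {x y : List α} :
    x ++ y ∈ M.accepts ↔ ∃ s ∈ M.eval x, y ∈ M.acceptsFrom {s} := by
  rw [accepts_eq_acceptsFrom_start, append_mem_acceptsFrom]
  simp only [mem_acceptsFrom]
  constructor
  · rintro ⟨f, hf, hfx⟩
    obtain ⟨s, hs, h⟩ := mem_evalFrom_iff_exists.1 hfx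
    exact ⟨s, hs, f, hf, h⟩
  · rintro ⟨s, hs, f, hf, h⟩
    exact ⟨f, hf, mem_evalFrom_iff_exists.2 ⟨s, hs, h⟩⟩

namespace Primrec

variable {α : Type*} [Primcodable α]

theorem nat_pow : Primrec₂ ((· ^ ·) : ℕ → ℕ → ℕ) :=
  Primrec₂.unpaired'.1 Nat.Primrec.pow

theorem list_replicate : Primrec₂ (List.replicate : ℕ → α → List α) :=
  (nat_iterate fst (const []) (list_cons.comp (snd.comp fst) snd).to₂).of_eq fun x => by
    induction x.1 with
    | zero => rfl
    | succ n ih => rw [Function.iterate_succ_apply', ih, List.replicate_succ]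

theorem list_sections : Primrec (List.sections : List (List α) → List (List α)) := by
  refine (list_foldr (g := fun _ => [[]])
    (h := fun _ (p : List α × List (List α)) => p.2.flatMap fun s => p.1.map (· :: s))
    Primrec.id (const [[]]) ?_).of_eq fun L => ?_
  · exact list_flatMap (snd.comp snd) (list_map (fst.comp (snd.comp fst))
      (list_cons.comp snd (snd.comp fst)).to₂).to₂
  · induction L with
    | nil => rfl
    | cons l L ih => simp_all

theorem list_mem : PrimrecRel fun (a : α) (L : List α) => a ∈ L :=
  Primrec.eq.exists_mem_list.swap.of_eq fun a L => by simp

theorem list_isSuffix : PrimrecRel (List.IsSuffix : List α → List α → Prop) :=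
  (Primrec.eq.comp fst (list_drop.comp (nat_sub.comp (list_length.comp snd) (list_length.comp fst))
    snd)).of_eq fun _ => List.suffix_iff_eq_drop.symm

end Primrec

theorem PrimrecRel.forall₂ {α β : Type*} [Primcodable α] [Primcodable β] [Inhabited α]
    [Inhabited β] {R : α → β → Prop} (hR : PrimrecRel R) : PrimrecRel (List.Forall₂ R) := by
  open Primrec in
  have hget : PrimrecRel fun (i : ℕ) (l : List α × List β) =>
      R (l.1.getD i default) (l.2.getD i default) :=
    hR.comp ((list_getD _).comp (fst.comp snd) fst) ((list_getD _).comp (snd.comp snd) fst)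
  have hlen : PrimrecRel fun (l₁ : List α) (l₂ : List β) => l₁.length = l₂.length :=
    Primrec.eq.comp (list_length.comp fst) (list_length.comp snd)
  refine (hlen.and (hget.forall_mem_list.comp (list_range.comp (list_length.comp fst))
    Primrec.id)).of_eq fun l => ?_
  rw [List.forall₂_iff_get]
  simp only [List.mem_range]
  refine and_congr_right fun hlen => ⟨fun h i h₁ h₂ => ?_, fun h i h₁ => ?_⟩
  · simpa [List.getD_eq_getElem, h₁, h₂] using h i h₁
  · simpa [List.getD_eq_getElem, h₁, hlen ▸ h₁] using h i h₁ (hlen ▸ h₁)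

namespace EncNFA

variable {β : Type}

def toNFA (M : EncNFA β) : NFA β ℕ where
  step q a := {q' | (q, a, q') ∈ M.1}
  start := {M.2.1}
  accept := {q | q ∈ M.2.2}

theorem mem_evalFrom_singleton_iff (M : EncNFA β) {q q' : ℕ} {u : List β} :
    q' ∈ M.toNFA.evalFrom {q} u ↔
      ∃ r : List ℕ, ∃ _ : r.length = u.length + 1, r.head? = some q ∧ r.getLast? = some q' ∧
        ∀ i (hi : i < u.length), (r[i], u[i], r[i + 1]) ∈ M.1 := by
  induction u generalizing q with
  | nil =>
    simp only [NFA.evalFrom_nil, Set.mem_singleton_iff, List.length_nil, zero_add]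
    constructor
    · rintro rfl
      exact ⟨[q'], rfl, rfl, rfl, nofun⟩
    · rintro ⟨r, hr, h₁, h₂, -⟩
      obtain ⟨a, rfl⟩ := List.length_eq_one_iff.1 hr
      simp_all
  | cons a u ih =>
    rw [NFA.evalFrom_cons, NFA.stepSet_singleton, NFA.mem_evalFrom_iff_exists]
    simp only [ih]
    constructor
    · rintro ⟨t, hqt, r, hr, hhead, hlast, hrun⟩
      obtain ⟨t', r', rfl⟩ := List.exists_cons_of_length_eq_add_one hr
      obtain rfl : t' = t := by simpa using hhead
      refine ⟨q :: t' :: r', by simpa using hr, rfl, by simpa using hlast, ?_⟩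
      rintro (_ | i) hi
      · exact hqt
      · exact hrun i (by simpa using hi)
    · rintro ⟨_ | ⟨q₀, _ | ⟨t, r⟩⟩, hr, hhead, hlast, hrun⟩
      · simp at hr
      · simp at hr
      obtain rfl : q₀ = q := by simpa using hhead
      refine ⟨t, hrun 0 (by simp), t :: r, by simpa using hr, rfl, by simpa using hlast, ?_⟩
      intro i hi
      exact hrun (i + 1) (by simpa using hi)

theorem encAccepts_iff_mem_accepts {M : EncNFA β} {u : List β} :
    encAccepts M u ↔ u ∈ M.toNFA.accepts := by
  change _ ↔ ∃ qf ∈ M.2.2, qf ∈ M.toNFA.evalFrom {M.2.1} u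
  simp only [encAccepts, mem_evalFrom_singleton_iff, List.get_eq_getElem]
  aesop

def states (M : EncNFA β) : List ℕ := M.2.1 :: M.1.map (·.2.2)

theorem evalFrom_subset (M : EncNFA β) (S : Set ℕ) (u : List β) :
    M.toNFA.evalFrom S u ⊆ S ∪ {q | q ∈ M.1.map (·.2.2)} := by
  induction u generalizing S with
  | nil => exact Set.subset_union_left
  | cons a u ih =>
    refine (ih _).trans (Set.union_subset ?_ Set.subset_union_right)
    intro q hq
    obtain ⟨p, -, hp⟩ := NFA.mem_stepSet.1 hq
    exact Or.inr (List.mem_map.2 ⟨_, hp, rfl⟩)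

theorem eval_subset_states (M : EncNFA β) (u : List β) :
    M.toNFA.eval u ⊆ {q | q ∈ M.states} := by
  refine (M.evalFrom_subset _ u).trans ?_
  rintro q (hq | hq)
  · exact List.mem_cons.2 (Or.inl hq)
  · exact List.mem_cons_of_mem _ hq

section evalList

variable [DecidableEq β]

def stepList (M : EncNFA β) (S : List ℕ) (a : β) : List ℕ :=
  (M.1.filter fun t => t.1 ∈ S ∧ t.2.1 = a).map (·.2.2)

def evalList (M : EncNFA β) (S : List ℕ) (u : List β) : List ℕ :=
  u.foldl M.stepList S

theorem mem_evalList {M : EncNFA β} {S : List ℕ} {u : List β} {q : ℕ} :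
    q ∈ M.evalList S u ↔ q ∈ M.toNFA.evalFrom {q | q ∈ S} u := by
  induction u generalizing S with
  | nil => rfl
  | cons a u ih =>
    have hstep : {q | q ∈ M.stepList S a} = M.toNFA.stepSet {q | q ∈ S} a := by
      ext q
      simp [stepList, NFA.mem_stepSet, toNFA, and_comm]
    rw [NFA.evalFrom_cons, ← hstep]
    exact ih

theorem encAccepts_iff_exists_mem_evalList {M : EncNFA β} {u : List β} :
    encAccepts M u ↔ ∃ qf ∈ M.2.2, qf ∈ M.evalList [M.2.1] u := by
  simp only [encAccepts_iff_mem_accepts, NFA.mem_accepts, mem_evalList, List.mem_singleton]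
  rfl

variable [Primcodable β]
open Primrec

theorem primrec_stepList :
    Primrec₂ fun (M : EncNFA β) (Sa : List ℕ × β) => M.stepList Sa.1 Sa.2 := by
  have hcond : PrimrecRel fun (t : ℕ × β × ℕ) (Sa : List ℕ × β) => t.1 ∈ Sa.1 ∧ t.2.1 = Sa.2 :=
    (list_mem.comp (fst.comp fst) (fst.comp snd)).and
      (Primrec.eq.comp (fst.comp (snd.comp fst)) (snd.comp snd))
  exact list_map (hcond.listFilter.comp (fst.comp fst) snd) (snd.comp (snd.comp snd)).to₂

theorem primrec_evalList :
    Primrec fun (x : EncNFA β × List ℕ × List β) => x.1.evalList x.2.1 x.2.2 :=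
  list_foldl (snd.comp snd) (fst.comp snd) (primrec_stepList.comp (fst.comp fst) snd).to₂

theorem primrecRel_encAccepts : PrimrecRel (encAccepts (β := β)) := by
  have hmem : PrimrecRel fun (qf : ℕ) (x : EncNFA β × List β) =>
      qf ∈ x.1.evalList [x.1.2.1] x.2 :=
    list_mem.comp fst (primrec_evalList.comp (Primrec.pair (fst.comp snd)
      (Primrec.pair (list_cons.comp (fst.comp (snd.comp (fst.comp snd))) (const []))
        (snd.comp snd))))
  exact (hmem.exists_mem_list.comp (snd.comp (snd.comp fst)) (Primrec.pair fst snd)).of_eq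
    fun _ => encAccepts_iff_exists_mem_evalList.symm

end evalList

section Pumping

variable {M : EncNFA β} {w : List β} {p p' : ℕ}

theorem exists_split (h : encAccepts M w) (p : ℕ) :
    ∃ s ∈ M.toNFA.eval (w.rdrop p), w.rtake p ∈ M.toNFA.acceptsFrom {s} := by
  rw [encAccepts_iff_mem_accepts, ← List.take_append_drop (w.length - p) w] at h
  exact NFA.append_mem_accepts_iff.1 h

open Classical in
noncomputable def splitState (M : EncNFA β) (w : List β) (p : ℕ) : ℕ :=
  if h : encAccepts M w then (exists_split h p).choose else M.2.1

theorem splitState_spec (h : encAccepts M w) (p : ℕ) :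
    M.splitState w p ∈ M.toNFA.eval (w.rdrop p) ∧
      w.rtake p ∈ M.toNFA.acceptsFrom {M.splitState w p} := by
  rw [splitState, dif_pos h]
  exact (exists_split h p).choose_spec

theorem splitState_mem_states (M : EncNFA β) (w : List β) (p : ℕ) :
    M.splitState w p ∈ M.states := by
  unfold splitState
  split_ifs with h
  · exact M.eval_subset_states _ (exists_split h p).choose_spec.1
  · exact List.mem_cons_self

theorem encAccepts_cutEnd_of_splitState_eq (h : encAccepts M w)
    (heq : M.splitState w p = M.splitState w p') : encAccepts M (w.cutEnd p p') := by
  rw [encAccepts_iff_mem_accepts, List.cutEnd, NFA.append_mem_accepts_iff]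
  exact ⟨_, heq ▸ (splitState_spec h p').1, (splitState_spec h p).2⟩

variable {l : List (EncNFA β)} {ws : List (List β)}

noncomputable def profile (l : List (EncNFA β)) (ws : List (List β)) (p : ℕ)
    (i : Fin (l.zip ws).length) : Option ℕ :=
  if p ≤ (l.zip ws)[i].2.length then some ((l.zip ws)[i].1.splitState (l.zip ws)[i].2 p)
  else none

def pumpingBound (l : List (EncNFA β)) : ℕ := ((l.flatMap states).length + 1) ^ l.length

theorem profile_mem_piFinset (l : List (EncNFA β)) (ws : List (List β)) (p : ℕ) :
    profile l ws p ∈ Fintype.piFinset fun _ => (none :: (l.flatMap states).map some).toFinset := by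
  rw [Fintype.mem_piFinset]
  intro i
  have hmem : (l.zip ws)[i.val] ∈ l.zip ws := List.getElem_mem _
  unfold profile
  split_ifs
  · simp only [List.mem_toFinset, List.mem_cons, List.mem_map, List.mem_flatMap]
    exact Or.inr ⟨_, ⟨_, (List.of_mem_zip hmem).1, splitState_mem_states _ _ _⟩, rfl⟩
  · simp

theorem card_piFinset_le_pumpingBound (l : List (EncNFA β)) (ws : List (List β)) :
    (Fintype.piFinset fun _ : Fin (l.zip ws).length =>
      (none :: (l.flatMap states).map some).toFinset).card ≤ pumpingBound l := by
  rw [Fintype.card_piFinset_const, pumpingBound]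
  calc _ ≤ ((l.flatMap states).length + 1) ^ (l.zip ws).length :=
        Nat.pow_le_pow_left ((List.toFinset_card_le _).trans_eq (by simp)) _
    _ ≤ _ := Nat.pow_le_pow_right (Nat.succ_pos _) (by simp)

theorem forall₂_encAccepts_cutEnd_of_profile_eq (h : List.Forall₂ encAccepts l ws)
    (hpp' : p < p') (heq : profile l ws p = profile l ws p') :
    List.Forall₂ (fun M w => encAccepts M (w.cutEnd p p')) l ws := by
  refine List.forall₂_iff_zip.2 ⟨h.length_eq, fun {M w} hMw => ?_⟩
  have hacc := List.forall₂_zip h hMw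
  obtain ⟨i, hi, hZi⟩ := List.getElem_of_mem hMw
  have hprofile := congrFun heq ⟨i, hi⟩
  simp only [profile, Fin.getElem_fin, hZi] at hprofile
  by_cases hw : p' ≤ w.length
  · rw [if_pos (by omega), if_pos hw, Option.some_inj] at hprofile
    exact encAccepts_cutEnd_of_splitState_eq hacc hprofile
  · have hwp : w.length < p := by
      by_contra hc
      rw [if_pos (by omega), if_neg hw] at hprofile
      exact Option.some_ne_none _ hprofile
    rwa [List.cutEnd_of_length_le hpp'.le hwp.le]

theorem exists_forall₂_encAccepts_cutEnd (h : List.Forall₂ encAccepts l ws) {L : ℕ}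
    (hL : pumpingBound l ≤ L) :
    ∃ p p', p < p' ∧ p' ≤ L ∧ List.Forall₂ (fun M w => encAccepts M (w.cutEnd p p')) l ws := by
  obtain ⟨p, p', hpp', hp'L, heq⟩ := exists_lt_le_map_eq_of_card_le
    ((card_piFinset_le_pumpingBound l ws).trans hL) (profile_mem_piFinset l ws)
  exact ⟨p, p', hpp', hp'L, forall₂_encAccepts_cutEnd_of_profile_eq h hpp' heq⟩

end Pumping

variable {l : List (EncNFA β)} {I : List (ℕ × ℕ)} {ws : List (List β)}

/-- An index out of range denotes the empty word. -/
def IsSolution (l : List (EncNFA β)) (I : List (ℕ × ℕ)) (ws : List (List β)) : Prop :=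
  List.Forall₂ encAccepts l ws ∧ ∀ p ∈ I, ws.getD p.1 [] <:+ ws.getD p.2 []

theorem IsSolution.map_cutEnd {p p' : ℕ} (h : IsSolution l I ws) (hpp' : p ≤ p')
    (hacc : List.Forall₂ (fun M w => encAccepts M (w.cutEnd p p')) l ws) :
    IsSolution l I (ws.map (List.cutEnd p p')) := by
  refine ⟨List.forall₂_map_right_iff.2 hacc, fun q hq => ?_⟩
  rw [← List.cutEnd_nil (p := p) (p' := p'), List.getD_map, List.getD_map]
  exact (h.2 q hq).cutEnd hpp'

theorem IsSolution.exists_length_le (h : IsSolution l I ws) :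
    ∃ ws', IsSolution l I ws' ∧ ∀ w ∈ ws', w.length ≤ pumpingBound l := by
  induction hn : (ws.map List.length).sum using Nat.strong_induction_on generalizing ws with
  | _ n ih =>
  by_cases hshort : ∀ w ∈ ws, w.length ≤ pumpingBound l
  · exact ⟨ws, h, hshort⟩
  push Not at hshort
  obtain ⟨w₀, hw₀, hlong⟩ := hshort
  obtain ⟨p, p', hpp', hp', hacc⟩ := exists_forall₂_encAccepts_cutEnd h.1 hlong.le
  refine ih _ ?_ (h.map_cutEnd hpp'.le hacc) rfl
  rw [← hn, List.map_map]
  exact List.sum_lt_sum _ _ (fun w _ => List.length_cutEnd_le hpp'.le w)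
    ⟨w₀, hw₀, List.length_cutEnd_lt hpp' hp'⟩

theorem exists_isSolution_iff [Fintype β] : (∃ ws, IsSolution l I ws) ↔
    ∃ ws ∈ (List.replicate l.length (wordsOfLengthLE β (pumpingBound l))).sections,
      IsSolution l I ws := by
  refine ⟨fun ⟨ws, h⟩ => ?_, fun ⟨ws, _, h⟩ => ⟨ws, h⟩⟩
  obtain ⟨ws', h', hshort⟩ := h.exists_length_le
  refine ⟨ws', List.mem_sections_replicate.2 ⟨h'.1.length_eq.symm, fun w hw => ?_⟩, h'⟩
  exact mem_wordsOfLengthLE.2 (hshort w hw)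

theorem isSolution_iff_get (hI : ∀ p ∈ I, p.1 < l.length ∧ p.2 < l.length) :
    IsSolution l I ws ↔ ws.length = l.length ∧
      (∀ t (htw : t < ws.length) (htl : t < l.length),
        encAccepts (l.get ⟨t, htl⟩) (ws.get ⟨t, htw⟩)) ∧
      ∀ p ∈ I, ∀ (hi : p.1 < ws.length) (hj : p.2 < ws.length),
        ws.get ⟨p.1, hi⟩ <:+ ws.get ⟨p.2, hj⟩ := by
  rw [IsSolution, List.forall₂_iff_get, eq_comm (a := l.length), and_assoc]
  refine and_congr_right fun hlen =>
    and_congr ⟨fun h t htw htl => h t htl htw, fun h t htl htw => h t htw htl⟩ ?_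
  refine forall₂_congr fun p hp => ?_
  have := hI p hp
  simp [hlen, this]

variable [Primcodable β] [DecidableEq β]
open Primrec

theorem primrecPred_isSolution :
    PrimrecPred fun x : (List (EncNFA β) × List (ℕ × ℕ)) × List (List β) =>
      IsSolution x.1.1 x.1.2 x.2 := by
  have hsuf : PrimrecRel fun (p : ℕ × ℕ) (ws : List (List β)) =>
      ws.getD p.1 [] <:+ ws.getD p.2 [] :=
    list_isSuffix.comp ((list_getD _).comp snd (fst.comp fst))
      ((list_getD _).comp snd (snd.comp fst))
  exact (primrecRel_encAccepts.forall₂.comp (fst.comp fst) snd).and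
    (hsuf.forall_mem_list.comp (snd.comp fst) snd)

variable [Fintype β]

theorem primrecRel_exists_isSolution :
    PrimrecRel fun (l : List (EncNFA β)) (I : List (ℕ × ℕ)) => ∃ ws, IsSolution l I ws := by
  have hstates : Primrec (states (β := β)) :=
    list_cons.comp (fst.comp snd) (list_map fst (snd.comp (snd.comp snd)).to₂)
  have hbound : Primrec (pumpingBound (β := β)) :=
    nat_pow.comp (succ.comp (list_length.comp (list_flatMap Primrec.id (hstates.comp snd).to₂)))
      list_length
  have hwords : Primrec (wordsOfLengthLE β) :=
    list_flatMap (list_range.comp succ)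
      (list_sections.comp (list_replicate.comp snd (const _))).to₂
  have hcand : Primrec fun l : List (EncNFA β) =>
      (List.replicate l.length (wordsOfLengthLE β (pumpingBound l))).sections :=
    list_sections.comp (list_replicate.comp list_length (hwords.comp hbound))
  have hsol : PrimrecRel fun (ws : List (List β)) (x : List (EncNFA β) × List (ℕ × ℕ)) =>
      IsSolution x.1 x.2 ws :=
    primrecPred_isSolution.comp (Primrec.pair snd fst)
  exact (hsol.exists_mem_list.comp (hcand.comp fst) Primrec.id).of_eq
    fun _ => exists_isSolution_iff.symm

theorem primrecPred_wellFormed_and_exists_isSolution :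
    PrimrecPred fun x : ℕ × List (List (EncNFA β)) × List (ℕ × ℕ) =>
      (∀ l ∈ x.2.1, l.length = x.1) ∧ (∀ p ∈ x.2.2, p.1 < x.1 ∧ p.2 < x.1) ∧
        ∃ l ∈ x.2.1, ∃ ws, IsSolution l x.2.2 ws := by
  have hlen : PrimrecRel fun (l : List (EncNFA β))
      (x : ℕ × List (List (EncNFA β)) × List (ℕ × ℕ)) => l.length = x.1 :=
    Primrec.eq.comp (list_length.comp fst) (fst.comp snd)
  have hI : PrimrecRel fun (p : ℕ × ℕ) (x : ℕ × List (List (EncNFA β)) × List (ℕ × ℕ)) =>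
      p.1 < x.1 ∧ p.2 < x.1 :=
    (nat_lt.comp (fst.comp fst) (fst.comp snd)).and (nat_lt.comp (snd.comp fst) (fst.comp snd))
  have hsol : PrimrecRel fun (l : List (EncNFA β))
      (x : ℕ × List (List (EncNFA β)) × List (ℕ × ℕ)) => ∃ ws, IsSolution l x.2.2 ws :=
    primrecRel_exists_isSolution.comp fst (snd.comp (snd.comp snd))
  exact (hlen.forall_mem_list.comp (fst.comp snd) Primrec.id).and
    ((hI.forall_mem_list.comp (snd.comp snd) Primrec.id).and
      (hsol.exists_mem_list.comp (fst.comp snd) Primrec.id))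

end EncNFA

/-- The generalized intersection problem of recognizable relations with the
suffix relation is decidable for arbitrary intersection patterns. -/
theorem genInt_rec_suffix_decidable (k : ℕ) :
    ComputablePred fun x : ℕ × List (List (EncNFA (Fin k))) × List (ℕ × ℕ) =>
      (∀ l ∈ x.2.1, l.length = x.1) ∧
      (∀ p ∈ x.2.2, p.1 < x.1 ∧ p.2 < x.1) ∧
      ∃ ws : List (List (Fin k)), ws.length = x.1 ∧
        ∃ l ∈ x.2.1,
          (∀ t, ∀ htw : t < ws.length, ∀ htl : t < l.length,
            encAccepts (l.get ⟨t, htl⟩) (ws.get ⟨t, htw⟩)) ∧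
          ∀ p ∈ x.2.2, ∀ hi : p.1 < ws.length, ∀ hj : p.2 < ws.length,
            (ws.get ⟨p.1, hi⟩).IsSuffix (ws.get ⟨p.2, hj⟩) := by
  refine (EncNFA.primrecPred_wellFormed_and_exists_isSolution.of_eq fun x => ?_).computablePred
  refine and_congr_right fun hR => and_congr_right fun hI => ⟨?_, ?_⟩
  · rintro ⟨l, hl, ws, hsol⟩
    obtain ⟨hlen, hacc, hsuf⟩ := (EncNFA.isSolution_iff_get (hR l hl ▸ hI)).1 hsol
    exact ⟨ws, hlen.trans (hR l hl), l, hl, hacc, hsuf⟩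
  · rintro ⟨ws, hlen, l, hl, hacc, hsuf⟩
    exact ⟨l, hl, ws,
      (EncNFA.isSolution_iff_get (hR l hl ▸ hI)).2 ⟨hlen.trans (hR l hl).symm, hacc, hsuf⟩⟩
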